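/- arXiv:2304.02081 — 3 statements merged into one kernel-verified Lean document; each statement's English description precedes it below -/
import Mathlib

section
/- Let K ⊆ ℝ^q be a convex cone and y ∈ ℝ^q. If the set {y} + B(0,δ) (closed Euclidean ball of radius δ ≥ 0 around y) is disjoint from K ∩ B(0,1) and ‖y‖ ≤ 1, then {y} + B(0,δ) is disjoint from K. -/
open scoped Pointwise

/-- Let `K ⊆ ℝ^q` be a convex cone and `y ∈ ℝ^q`. If `{y} + B(0,δ)`
(closed Euclidean ball of radius `δ ≥ 0`) is disjoint from `K ∩ B(0,1)` and `‖y‖ ≤ 1`,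
then `{y} + B(0,δ)` is disjoint from `K`. -/
theorem stmt_0 {q : ℕ} (K : Set (EuclideanSpace ℝ (Fin q)))
    (hKconv : Convex ℝ K)
    (hKcone : ∀ x ∈ K, ∀ t : ℝ, 0 ≤ t → t • x ∈ K)
    (y : EuclideanSpace ℝ (Fin q)) (δ : ℝ) (hδ : 0 ≤ δ) (hy : ‖y‖ ≤ 1)
    (hdisj : Disjoint (({y} + Metric.closedBall 0 δ : Set (EuclideanSpace ℝ (Fin q))))
      (K ∩ Metric.closedBall 0 1)) :
    Disjoint (({y} + Metric.closedBall 0 δ : Set (EuclideanSpace ℝ (Fin q)))) K := by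
  rw [Set.disjoint_left] at hdisj ⊢
  intro p hp hpK
  have hmemball : ∀ z : EuclideanSpace ℝ (Fin q), ‖z - y‖ ≤ δ →
      z ∈ ({y} + Metric.closedBall 0 δ : Set (EuclideanSpace ℝ (Fin q))) := by
    intro z hz
    rw [Set.mem_add]
    exact ⟨y, rfl, z - y, by simpa using hz, by abel⟩
  have hb : ‖p - y‖ ≤ δ := by
    obtain ⟨a, ha, c, hc, hac⟩ := Set.mem_add.mp hp
    rw [Set.mem_singleton_iff] at ha
    subst ha
    have : p - a = c := by rw [← hac]; abel
    simpa only [Metric.mem_closedBall, dist_zero_right, this] using hc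
  set b := p - y with hbdef
  by_cases hp0 : p = 0
  · exact hdisj hp ⟨hpK, by simp [hp0]⟩
  have hpn : (0:ℝ) < ‖p‖ := norm_pos_iff.mpr hp0
  set ip : ℝ := inner ℝ y p with hip
  have hCS : ip ≤ ‖y‖ * ‖p‖ := real_inner_le_norm y p
  have hbsq : ‖b‖^2 = ‖p‖^2 - 2*ip + ‖y‖^2 := by
    rw [hbdef, norm_sub_sq_real, real_inner_comm]
    try ring
  by_cases hipos : ip ≤ 0
  ·
    have h0K : (0 : EuclideanSpace ℝ (Fin q)) ∈ K := by
      simpa using hKcone p hpK 0 le_rfl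
    have hyd : ‖(0 : EuclideanSpace ℝ (Fin q)) - y‖ ≤ δ := by
      have h1 : ‖y‖^2 ≤ ‖b‖^2 := by nlinarith
      have h2 : ‖y‖ ≤ ‖b‖ := by
        nlinarith [norm_nonneg y, norm_nonneg b]
      simpa using h2.trans hb
    exact hdisj (hmemball 0 hyd) ⟨h0K, by simp⟩
  · push_neg at hipos
    set lam : ℝ := ip / ‖p‖^2 with hlam
    have hlam0 : 0 ≤ lam := le_of_lt (div_pos hipos (by positivity))
    have hmemK : lam • p ∈ K := hKcone p hpK lam hlam0
    have hnsq : ‖lam • p‖ = lam * ‖p‖ := by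
      rw [norm_smul, Real.norm_eq_abs, abs_of_nonneg hlam0]
    have hn1 : ‖lam • p‖ ≤ 1 := by
      rw [hnsq, hlam]
      rw [div_mul_eq_mul_div, div_le_one (by positivity)]
      calc ip * ‖p‖ ≤ (‖y‖ * ‖p‖) * ‖p‖ := by nlinarith
        _ ≤ 1 * ‖p‖^2 := by nlinarith
        _ = ‖p‖^2 := by ring
    have hdsq : ‖lam • p - y‖^2 ≤ ‖b‖^2 := by
      have h1 : ‖lam • p - y‖^2 = lam^2 * ‖p‖^2 - 2 * lam * ip + ‖y‖^2 := by
        rw [norm_sub_sq_real, norm_smul, real_inner_smul_left, real_inner_comm,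
          Real.norm_eq_abs, abs_of_nonneg hlam0, mul_pow]
        ring
      have hps : (0:ℝ) < ‖p‖^2 := by positivity
      have hlip : lam * ‖p‖^2 = ip := by rw [hlam]; field_simp
      rw [h1, hbsq]
      nlinarith [sq_nonneg (‖p‖^2 - ip), hps, hlip]
    have hd : ‖lam • p - y‖ ≤ δ := by
      have h2 : ‖lam • p - y‖ ≤ ‖b‖ := by
        nlinarith [norm_nonneg (lam • p - y), norm_nonneg b]
      exact h2.trans hb
    exact hdisj (hmemball _ hd) ⟨hmemK, by simpa using hn1⟩
end

section
/- Let P ⊆ ℝ^q be a closed convex cone and let Z ⊆ ℝ^q be a finite set with cone(Z) ⊆ P⁺ and Hausdorff distance d^H(P⁺ ∩ B(0,1), cone(Z) ∩ B(0,1)) ≤ δ. Then P ⊆ (cone Z)⁺ and d^H(P ∩ B(0,1), (cone Z)⁺ ∩ B(0,1)) ≤ δ, i.e., any finite set Y generating (cone Z)⁺ is a finite δ-outer approximation of P. -/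
/-- The (convex) conic hull: all conic combinations of points of `Z`. -/
def coneHull {E : Type*} [AddCommMonoid E] [Module ℝ E] (Z : Set E) : Set E :=
  {y | ∃ (n : ℕ) (c : Fin n → ℝ) (z : Fin n → E),
    (∀ i, 0 ≤ c i) ∧ (∀ i, z i ∈ Z) ∧ y = ∑ i, c i • z i}

/-- The dual cone `A⁺ = {w | wᵀa ≥ 0 ∀ a ∈ A}`. -/
def dualCone {q : ℕ} (A : Set (EuclideanSpace ℝ (Fin q))) : Set (EuclideanSpace ℝ (Fin q)) :=
  {w | ∀ a ∈ A, 0 ≤ (inner ℝ w a : ℝ)}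

lemma zero_mem_coneHull {E : Type*} [AddCommMonoid E] [Module ℝ E] (Z : Set E) :
    (0 : E) ∈ coneHull Z :=
  ⟨0, Fin.elim0, Fin.elim0, fun i => i.elim0, fun i => i.elim0, by simp⟩

lemma zero_mem_dualCone {q : ℕ} (A : Set (EuclideanSpace ℝ (Fin q))) :
    (0 : EuclideanSpace ℝ (Fin q)) ∈ dualCone A := by
  intro a _; simp [inner_zero_left]

/-- Let `P ⊆ ℝ^q` be a closed convex cone and `Z` a finite set with
`cone Z ⊆ P⁺` and `d^H(P⁺ ∩ B(0,1), cone Z ∩ B(0,1)) ≤ δ`. Then `P ⊆ (cone Z)⁺` and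
`d^H(P ∩ B(0,1), (cone Z)⁺ ∩ B(0,1)) ≤ δ`. -/
theorem stmt_2 {q : ℕ} (P : Set (EuclideanSpace ℝ (Fin q)))
    (hPclosed : IsClosed P) (hPconv : Convex ℝ P)
    (hPcone : ∀ x ∈ P, ∀ t : ℝ, 0 ≤ t → t • x ∈ P)
    (Z : Set (EuclideanSpace ℝ (Fin q))) (hZfin : Z.Finite) (δ : ℝ)
    (hsub : coneHull Z ⊆ dualCone P)
    (hdist : Metric.hausdorffDist (dualCone P ∩ Metric.closedBall 0 1)
      (coneHull Z ∩ Metric.closedBall 0 1) ≤ δ) :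
    P ⊆ dualCone (coneHull Z) ∧
      Metric.hausdorffDist (P ∩ Metric.closedBall 0 1)
        (dualCone (coneHull Z) ∩ Metric.closedBall 0 1) ≤ δ := by
  have hδ0 : 0 ≤ δ := le_trans Metric.hausdorffDist_nonneg hdist
  have hsubP : P ⊆ dualCone (coneHull Z) := by
    intro x hx a ha
    have := hsub ha x hx
    rwa [real_inner_comm]
  refine ⟨hsubP, ?_⟩
  rcases P.eq_empty_or_nonempty with hP | hPne
  · rw [hP]
    simpa using hδ0
  have h0P : (0 : EuclideanSpace ℝ (Fin q)) ∈ P := by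
    obtain ⟨x, hx⟩ := hPne
    simpa using hPcone x hx 0 le_rfl
  -- nonemptiness and boundedness facts
  have hne1 : (dualCone P ∩ Metric.closedBall 0 1).Nonempty :=
    ⟨0, zero_mem_dualCone P, by simp⟩
  have hne2 : (coneHull Z ∩ Metric.closedBall 0 1).Nonempty :=
    ⟨0, zero_mem_coneHull Z, by simp⟩
  have hbd1 : Bornology.IsBounded (dualCone P ∩ Metric.closedBall 0 1) :=
    (Metric.isBounded_closedBall).subset Set.inter_subset_right
  have hbd2 : Bornology.IsBounded (coneHull Z ∩ Metric.closedBall 0 1) :=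
    (Metric.isBounded_closedBall).subset Set.inter_subset_right
  have hedist : EMetric.hausdorffEdist (dualCone P ∩ Metric.closedBall 0 1)
      (coneHull Z ∩ Metric.closedBall 0 1) ≠ ⊤ :=
    Metric.hausdorffEdist_ne_top_of_nonempty_of_bounded hne1 hne2 hbd1 hbd2
  -- the key estimate
  apply Metric.hausdorffDist_le_of_infDist hδ0
  · intro x hx
    have hx' : x ∈ dualCone (coneHull Z) ∩ Metric.closedBall 0 1 :=
      ⟨hsubP hx.1, hx.2⟩
    calc Metric.infDist x (dualCone (coneHull Z) ∩ Metric.closedBall 0 1) = 0 :=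
          Metric.infDist_zero_of_mem hx'
      _ ≤ δ := hδ0
  · rintro w ⟨hw, hwB⟩
    have hwnorm : ‖w‖ ≤ 1 := by simpa using hwB
    -- project w onto P
    obtain ⟨p, hpP, hproj⟩ :=
      exists_norm_eq_iInf_of_complete_convex hPne (hPclosed.isComplete) hPconv w
    have hchar : ∀ x ∈ P, (inner ℝ (w - p) (x - p) : ℝ) ≤ 0 :=
      (norm_eq_iInf_iff_real_inner_le_zero hPconv hpP).mp hproj
    set r : EuclideanSpace ℝ (Fin q) := w - p with hr
    have hrp : (inner ℝ r p : ℝ) = 0 := by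
      have h1 : (inner ℝ r ((0:EuclideanSpace ℝ (Fin q)) - p) : ℝ) ≤ 0 := hchar 0 h0P
      have h2p : (2:ℝ) • p ∈ P := hPcone p hpP 2 (by norm_num)
      have h2 : (inner ℝ r ((2:ℝ) • p - p) : ℝ) ≤ 0 := hchar _ h2p
      have e1 : (inner ℝ r ((0:EuclideanSpace ℝ (Fin q)) - p) : ℝ) = -(inner ℝ r p : ℝ) := by
        rw [zero_sub, inner_neg_right]
      have e2 : ((2:ℝ) • p - p) = p := by module
      rw [e1] at h1
      rw [e2] at h2
      linarith
    have hpr : (inner ℝ p r : ℝ) = 0 := by rw [real_inner_comm]; exact hrp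
    have hrx : ∀ x ∈ P, (inner ℝ r x : ℝ) ≤ 0 := by
      intro x hx
      have := hchar x hx
      rw [inner_sub_right] at this
      linarith [hrp ▸ this]
    -- norms
    have hwpr : w = p + r := by rw [hr]; abel
    have hprnorm : ‖w‖^2 = ‖p‖^2 + ‖r‖^2 := by
      have h : ‖w‖^2 = ‖p‖^2 + 2 * (inner ℝ p r : ℝ) + ‖r‖^2 := by
        rw [hwpr, norm_add_sq_real]
      rw [h, hpr]; ring
    have hpnorm : ‖p‖ ≤ 1 := by nlinarith [norm_nonneg p, norm_nonneg r, norm_nonneg w]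
    have hrnorm1 : ‖r‖ ≤ 1 := by nlinarith [norm_nonneg p, norm_nonneg r, norm_nonneg w]
    -- main claim : ‖r‖ ≤ δ
    have hrδ : ‖r‖ ≤ δ := by
      rcases eq_or_ne r 0 with hr0 | hr0
      · simpa [hr0] using hδ0
      have hrpos : 0 < ‖r‖ := norm_pos_iff.mpr hr0
      refine le_of_forall_pos_le_add ?_
      intro ε hε
      set u : EuclideanSpace ℝ (Fin q) := -(‖r‖⁻¹ • r) with hu
      have huP : u ∈ dualCone P := by
        intro a ha
        have : (inner ℝ u a : ℝ) = -(‖r‖⁻¹ * (inner ℝ r a : ℝ)) := by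
          rw [hu, inner_neg_left, real_inner_smul_left]
        rw [this]
        have := hrx a ha
        have hinv : (0:ℝ) ≤ ‖r‖⁻¹ := by positivity
        nlinarith
      have hunorm : ‖u‖ = 1 := by
        rw [hu, norm_neg, norm_smul, norm_inv, norm_norm]
        field_simp
      have huB : u ∈ dualCone P ∩ Metric.closedBall 0 1 := by
        refine ⟨huP, ?_⟩
        simp [hunorm]
      have hlt : Metric.hausdorffDist (dualCone P ∩ Metric.closedBall 0 1)
          (coneHull Z ∩ Metric.closedBall 0 1) < δ + ε := lt_of_le_of_lt hdist (by linarith)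
      obtain ⟨v, hv, hdvu⟩ := Metric.exists_dist_lt_of_hausdorffDist_lt huB hlt hedist
      have hwv : 0 ≤ (inner ℝ w v : ℝ) := hw v hv.1
      have hwu : (inner ℝ w u : ℝ) = -‖r‖ := by
        rw [hwpr, hu, inner_neg_right, inner_add_left, real_inner_smul_right,
          real_inner_smul_right, hpr, real_inner_self_eq_norm_sq]
        field_simp
        ring
      have habs : |(inner ℝ w (u - v) : ℝ)| ≤ ‖w‖ * ‖u - v‖ := abs_real_inner_le_norm w (u - v)
      have h1 : -(‖w‖ * ‖u - v‖) ≤ (inner ℝ w (u - v) : ℝ) := (abs_le.mp habs).1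
      have hsplit : (inner ℝ w u : ℝ) = (inner ℝ w (u - v) : ℝ) + (inner ℝ w v : ℝ) := by
        rw [inner_sub_right]; ring
      have hnormuv : ‖u - v‖ = dist u v := (dist_eq_norm u v).symm
      rw [hnormuv] at h1
      have hdnn : (0:ℝ) ≤ dist u v := dist_nonneg
      nlinarith [norm_nonneg w]
    have hpB : p ∈ P ∩ Metric.closedBall 0 1 := ⟨hpP, by simpa using hpnorm⟩
    calc Metric.infDist w (P ∩ Metric.closedBall 0 1) ≤ dist w p :=
          Metric.infDist_le_dist_of_mem hpB
      _ = ‖r‖ := by rw [dist_eq_norm, hr]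
      _ ≤ δ := hrδ
end

section
/- Let F_1, …, F_n ∈ S^k, G ∈ S^k, P ∈ ℝ^{n×q}, and suppose there exists x̄ ∈ ℝ^n with x̄₁F₁ + … + x̄ₙFₙ + G ≺ 0 (Slater's condition). For w ∈ ℝ^q, the SDP inf{ wᵀPᵀx : Σᵢ xᵢFᵢ + G ⪯ 0 } is bounded below if and only if there exists Z ⪰ 0 with tr(FᵢZ) + eᵢᵀPw = 0 for i = 1,…,n. -/
open Matrix Set

private lemma aux_le_of_forall_pos_add {a b C : ℝ} (h : ∀ ε : ℝ, 0 < ε → a + ε * b ≤ C) :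
    a ≤ C := by
  have hc : Continuous fun ε : ℝ => a + ε * b := by continuity
  have ht : Filter.Tendsto (fun ε : ℝ => a + ε * b) (nhdsWithin 0 (Set.Ioi 0)) (nhds a) := by
    have := hc.tendsto 0
    simpa using this.mono_left nhdsWithin_le_nhds
  exact le_of_tendsto ht (eventually_nhdsWithin_of_forall fun ε hε => h ε hε)

private lemma aux_nonpos_of_forall_pos_add {a b C : ℝ} (h : ∀ t : ℝ, 0 < t → a + t * b ≤ C) :
    b ≤ 0 := by
  by_contra h'
  push_neg at h'
  have ht : 0 < (|C - a| + 1) / b := by positivity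
  have h2 := h _ ht
  rw [div_mul_cancel₀ _ (ne_of_gt h')] at h2
  have := le_abs_self (C - a)
  linarith

private lemma aux_eq_zero_of_forall_mul_le {d e C : ℝ} (h : ∀ t : ℝ, t * d + e ≤ C) : d = 0 := by
  have h1 : d ≤ 0 := aux_nonpos_of_forall_pos_add (a := e) (C := C) fun t ht => by linarith [h t]
  have h2 : -d ≤ 0 := aux_nonpos_of_forall_pos_add (a := e) (C := C) fun t ht => by linarith [h (-t)]
  linarith

private lemma aux_dotProduct_self_pos {k : ℕ} {v : Fin k → ℝ} (hv : v ≠ 0) : 0 < v ⬝ᵥ v := by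
  have h1 : 0 ≤ v ⬝ᵥ v := Finset.sum_nonneg fun i _ => mul_self_nonneg _
  have h2 : v ⬝ᵥ v ≠ 0 := fun h => hv (dotProduct_self_eq_zero.mp h)
  exact lt_of_le_of_ne h1 (Ne.symm h2)

private lemma aux_trace_mul_psd_nonneg {k : ℕ} {A B : Matrix (Fin k) (Fin k) ℝ}
    (hA : A.PosSemidef) (hB : B.PosSemidef) : 0 ≤ (A * B).trace := by
  obtain ⟨C, rfl⟩ := (by open scoped MatrixOrder in exact CStarAlgebra.nonneg_iff_eq_star_mul_self.mp hA.nonneg : ∃ C : Matrix (Fin k) (Fin k) ℝ, A = Cᴴ * C)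
  obtain ⟨D, rfl⟩ := (by open scoped MatrixOrder in exact CStarAlgebra.nonneg_iff_eq_star_mul_self.mp hB.nonneg : ∃ C : Matrix (Fin k) (Fin k) ℝ, B = Cᴴ * C)
  have h1 : (Cᴴ * C * (Dᴴ * D)).trace = ((C * Dᴴ)ᴴ * (C * Dᴴ)).trace := by
    rw [Matrix.conjTranspose_mul, Matrix.conjTranspose_conjTranspose]
    rw [show Cᴴ * C * (Dᴴ * D) = Cᴴ * (C * Dᴴ * D) by noncomm_ring]
    rw [Matrix.trace_mul_comm, show C * Dᴴ * D * Cᴴ = C * Dᴴ * (D * Cᴴ) by noncomm_ring,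
      Matrix.trace_mul_comm]
  rw [h1]
  rw [Matrix.trace]
  refine Finset.sum_nonneg fun i _ => ?_
  rw [Matrix.diag_apply, Matrix.mul_apply]
  refine Finset.sum_nonneg fun j _ => ?_
  rw [Matrix.conjTranspose_apply]
  simp only [star_trivial]
  exact mul_self_nonneg _

private lemma aux_qpos_isOpen {k : ℕ} :
    IsOpen {u : Matrix (Fin k) (Fin k) ℝ | ∀ v : Fin k → ℝ, v ≠ 0 → 0 < v ⬝ᵥ u *ᵥ v} := by
  by_cases hk : k = 0
  · subst hk
    convert isOpen_univ
    ext u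
    simp only [Set.mem_setOf_eq, Set.mem_univ, iff_true]
    intro v hv
    exact absurd (Subsingleton.elim v 0) hv
  rw [isOpen_iff_mem_nhds]
  intro u₀ hu₀
  -- continuous quadratic form
  have hcont : Continuous fun v : Fin k → ℝ => v ⬝ᵥ u₀ *ᵥ v := by
    have : (fun v : Fin k → ℝ => v ⬝ᵥ u₀ *ᵥ v) = fun v => ∑ i, v i * ∑ j, u₀ i j * v j := by
      funext v; simp [dotProduct, Matrix.mulVec]
    rw [this]
    exact continuous_finset_sum _ fun i _ => (continuous_apply i).mul
      (continuous_finset_sum _ fun j _ => continuous_const.mul (continuous_apply j))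
  -- sphere is compact and nonempty
  have hsph : IsCompact (Metric.sphere (0 : Fin k → ℝ) 1) := isCompact_sphere 0 1
  have hne : (Metric.sphere (0 : Fin k → ℝ) 1).Nonempty := by
    haveI : Nonempty (Fin k) := ⟨⟨0, Nat.pos_of_ne_zero hk⟩⟩
    exact NormedSpace.sphere_nonempty.mpr zero_le_one
  obtain ⟨v₀, hv₀, hmin⟩ := hsph.exists_isMinOn hne hcont.continuousOn
  have hv₀norm : ‖v₀‖ = 1 := by simpa using hv₀
  have hv₀ne : v₀ ≠ 0 := by
    intro h; rw [h] at hv₀norm; simp at hv₀norm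
  set m : ℝ := v₀ ⬝ᵥ u₀ *ᵥ v₀ with hm
  have hmpos : 0 < m := hu₀ v₀ hv₀ne
  set δ : ℝ := m / ((k : ℝ) ^ 2 + 1) with hδ
  have hδpos : 0 < δ := by positivity
  refine Filter.mem_of_superset ?_ (?_ : {u : Matrix (Fin k) (Fin k) ℝ |
      ∀ i j, |u i j - u₀ i j| < δ} ⊆ _)
  · have : {u : Matrix (Fin k) (Fin k) ℝ | ∀ i j, |u i j - u₀ i j| < δ} =
        ⋂ i, ⋂ j, (fun u : Matrix (Fin k) (Fin k) ℝ => u i j) ⁻¹' Metric.ball (u₀ i j) δ := by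
      ext u; simp [Real.dist_eq]
    rw [this]
    refine (isOpen_iInter_of_finite fun i => isOpen_iInter_of_finite fun j =>
        Metric.isOpen_ball.preimage ?_).mem_nhds (by simp [hδpos])
    exact (continuous_apply j).comp (continuous_apply i)
  · intro u hu v hv
    set t : ℝ := ‖v‖ with htdef
    have htpos : 0 < t := norm_pos_iff.mpr hv
    set w : Fin k → ℝ := t⁻¹ • v with hw
    have hwnorm : ‖w‖ = 1 := by
      rw [hw, norm_smul, norm_inv, norm_norm, inv_mul_cancel₀ (ne_of_gt htpos)]
    have hvw : v = t • w := by
      rw [hw, smul_smul, mul_inv_cancel₀ (ne_of_gt htpos), one_smul]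
    -- bound the perturbation on unit vectors
    have hwb : ∀ i, |w i| ≤ 1 := fun i => by
      simpa [hwnorm] using norm_le_pi_norm w i
    have hpert : |w ⬝ᵥ (u - u₀) *ᵥ w| ≤ (k : ℝ) ^ 2 * δ := by
      have h1 : w ⬝ᵥ (u - u₀) *ᵥ w = ∑ i, ∑ j, w i * ((u i j - u₀ i j) * w j) := by
        simp [dotProduct, Matrix.mulVec, Finset.mul_sum, Matrix.sub_apply]
      rw [h1]
      calc |∑ i, ∑ j, w i * ((u i j - u₀ i j) * w j)|
          ≤ ∑ i, |∑ j, w i * ((u i j - u₀ i j) * w j)| := Finset.abs_sum_le_sum_abs _ _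
        _ ≤ ∑ i : Fin k, ∑ j : Fin k, |w i * ((u i j - u₀ i j) * w j)| :=
            Finset.sum_le_sum fun i _ => Finset.abs_sum_le_sum_abs _ _
        _ ≤ ∑ i : Fin k, ∑ j : Fin k, δ := by
            refine Finset.sum_le_sum fun i _ => Finset.sum_le_sum fun j _ => ?_
            rw [abs_mul, abs_mul]
            calc |w i| * (|u i j - u₀ i j| * |w j|)
                ≤ 1 * (δ * 1) := by
                  refine mul_le_mul (hwb i) (mul_le_mul (le_of_lt (hu i j)) (hwb j)
                    (abs_nonneg _) (le_of_lt hδpos)) (by positivity) zero_le_one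
              _ = δ := by ring
        _ = (k : ℝ) ^ 2 * δ := by simp [Finset.sum_const]; ring
    have hw0 : m ≤ w ⬝ᵥ u₀ *ᵥ w := hmin (by simp [hwnorm])
    have hsplit : w ⬝ᵥ u *ᵥ w = w ⬝ᵥ u₀ *ᵥ w + w ⬝ᵥ (u - u₀) *ᵥ w := by
      rw [← dotProduct_add, ← Matrix.add_mulVec]
      rw [add_sub_cancel]
    have hkd : (k : ℝ) ^ 2 * δ < m := by
      rw [hδ]
      rw [div_eq_mul_inv, ← mul_assoc]
      rw [mul_comm ((k:ℝ)^2) m, mul_assoc]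
      nth_rewrite 2 [← mul_one m]
      refine mul_lt_mul_of_pos_left ?_ hmpos
      rw [mul_inv_lt_iff₀ (by positivity), one_mul]
      linarith
    have hwpos : 0 < w ⬝ᵥ u *ᵥ w := by
      have := abs_le.mp hpert
      rw [hsplit]
      linarith [this.1]
    have : v ⬝ᵥ u *ᵥ v = t * (t * (w ⬝ᵥ u *ᵥ w)) := by
      rw [hvw, smul_dotProduct, Matrix.mulVec_smul, dotProduct_smul]
      simp [smul_eq_mul]
    rw [this]
    positivity

/-- Under Slater's condition, the SDP `inf {wᵀPᵀx : Σ x_i F_i + G ⪯ 0}`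
is bounded below iff there exists `Z ⪰ 0` with `tr(F_i Z) + e_iᵀ P w = 0` for all `i`. -/
theorem stmt_18 {n k q : ℕ} (F : Fin n → Matrix (Fin k) (Fin k) ℝ)
    (hF : ∀ i, (F i).IsSymm)
    (G : Matrix (Fin k) (Fin k) ℝ) (hG : G.IsSymm)
    (P : Matrix (Fin n) (Fin q) ℝ)
    (hslater : ∃ x : Fin n → ℝ, (-(∑ i, x i • F i + G)).PosDef)
    (w : Fin q → ℝ) :
    BddBelow ((fun x => ∑ i, P.mulVec w i * x i) ''
        {x : Fin n → ℝ | (-(∑ i, x i • F i + G)).PosSemidef}) ↔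
      ∃ Z : Matrix (Fin k) (Fin k) ℝ, Z.PosSemidef ∧
        ∀ i, (F i * Z).trace + P.mulVec w i = 0 := by
  classical
  set c : Fin n → ℝ := P.mulVec w with hc
  set M : (Fin n → ℝ) → Matrix (Fin k) (Fin k) ℝ := fun x => ∑ i, x i • F i + G with hM
  -- symmetry of M x
  have hMsymm : ∀ x, (M x).IsSymm := by
    intro x
    rw [Matrix.IsSymm, hM]
    simp only [Matrix.transpose_add, Matrix.transpose_sum, Matrix.transpose_smul]
    rw [hG]
    congr 1
    exact Finset.sum_congr rfl fun i _ => by rw [(hF i)]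
  -- affinity of M
  have hMaff : ∀ (a b : ℝ), a + b = 1 → ∀ x₁ x₂ : Fin n → ℝ,
      M (a • x₁ + b • x₂) = a • M x₁ + b • M x₂ := by
    intro a b hab x₁ x₂
    simp only [hM, smul_add]
    have h1 : ∑ i, (a • x₁ + b • x₂) i • F i
        = a • ∑ i, x₁ i • F i + b • ∑ i, x₂ i • F i := by
      rw [Finset.smul_sum, Finset.smul_sum, ← Finset.sum_add_distrib]
      refine Finset.sum_congr rfl fun i _ => ?_
      simp [add_smul, smul_smul]
    rw [h1]
    have h2 : (G : Matrix (Fin k) (Fin k) ℝ) = a • G + b • G := by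
      rw [← add_smul, hab, one_smul]
    conv_lhs => rw [h2]
    abel
  constructor
  · rintro ⟨b, hb⟩
    obtain ⟨xs, hxs⟩ := hslater
    have hxsPD : (-(M xs)).PosDef := hxs
    set A : Set (Matrix (Fin k) (Fin k) ℝ × ℝ) :=
      {p | ∃ x : Fin n → ℝ, (∀ v : Fin k → ℝ, v ≠ 0 → 0 < v ⬝ᵥ (p.1 - M x) *ᵥ v) ∧
        ∑ i, c i * x i < p.2} with hA
    have hAopen : IsOpen A := by
      have : A = ⋃ x : Fin n → ℝ,
          ((fun u : Matrix (Fin k) (Fin k) ℝ => u - M x) ⁻¹'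
            {u | ∀ v : Fin k → ℝ, v ≠ 0 → 0 < v ⬝ᵥ u *ᵥ v}) ×ˢ Set.Ioi (∑ i, c i * x i) := by
        ext p
        simp only [hA, Set.mem_setOf_eq, Set.mem_iUnion, Set.mem_prod, Set.mem_preimage,
          Set.mem_Ioi]
      rw [this]
      exact isOpen_iUnion fun x => IsOpen.prod
        (aux_qpos_isOpen.preimage (continuous_id.sub continuous_const)) isOpen_Ioi
    have hAconv : Convex ℝ A := by
      rintro p ⟨x₁, hq₁, ho₁⟩ pq ⟨x₂, hq₂, ho₂⟩ a b' ha hb' hab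
      refine ⟨a • x₁ + b' • x₂, ?_, ?_⟩
      · intro v hv
        have heq : (a • p + b' • pq).1 - M (a • x₁ + b' • x₂)
            = a • (p.1 - M x₁) + b' • (pq.1 - M x₂) := by
          rw [hMaff a b' hab]
          simp only [Prod.fst_add, Prod.smul_fst]
          rw [smul_sub, smul_sub]
          abel
        rw [heq, Matrix.add_mulVec, dotProduct_add, Matrix.smul_mulVec,
          Matrix.smul_mulVec, dotProduct_smul, dotProduct_smul]
        simp only [smul_eq_mul]
        rcases eq_or_lt_of_le ha with ha0 | ha0
        · have hb1 : b' = 1 := by linarith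
          rw [← ha0, hb1]
          simpa using hq₂ v hv
        · have h1 : 0 < a * (v ⬝ᵥ (p.1 - M x₁) *ᵥ v) := mul_pos ha0 (hq₁ v hv)
          have h2 : 0 ≤ b' * (v ⬝ᵥ (pq.1 - M x₂) *ᵥ v) := mul_nonneg hb' (le_of_lt (hq₂ v hv))
          linarith
      · have hsum : ∑ i, c i * (a • x₁ + b' • x₂) i
            = a * (∑ i, c i * x₁ i) + b' * (∑ i, c i * x₂ i) := by
          rw [Finset.mul_sum, Finset.mul_sum, ← Finset.sum_add_distrib]
          refine Finset.sum_congr rfl fun i _ => ?_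
          simp only [Pi.add_apply, Pi.smul_apply, smul_eq_mul]
          ring
        rw [hsum]
        have hsnd : (a • p + b' • pq).2 = a * p.2 + b' * pq.2 := by
          simp [smul_eq_mul]
        rw [hsnd]
        rcases eq_or_lt_of_le ha with ha0 | ha0
        · have hb1 : b' = 1 := by linarith
          rw [← ha0, hb1]; simpa using ho₂
        · exact add_lt_add_of_lt_of_le (mul_lt_mul_of_pos_left ho₁ ha0)
            (mul_le_mul_of_nonneg_left (le_of_lt ho₂) hb')
    have hnotmem : ((0 : Matrix (Fin k) (Fin k) ℝ), b) ∉ A := by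
      rintro ⟨x, hq, hlt⟩
      have hfeas : (-(M x)).PosSemidef := by
        refine Matrix.PosSemidef.of_dotProduct_mulVec_nonneg ?_ ?_
        · rw [Matrix.IsHermitian, Matrix.conjTranspose_eq_transpose_of_trivial]
          rw [Matrix.transpose_neg, (hMsymm x)]
        · intro v
          by_cases hv : v = 0
          · simp [hv]
          · have := hq v hv
            simp only [zero_sub] at this
            simpa [star_trivial] using le_of_lt this
      have hble : b ≤ ∑ i, c i * x i := hb ⟨x, hfeas, rfl⟩
      linarith
    obtain ⟨f, hf⟩ := geometric_hahn_banach_open_point hAconv hAopen hnotmem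
    -- hf : ∀ a ∈ A, f a < f (0, b)
    set Φ : Matrix (Fin k) (Fin k) ℝ →ₗ[ℝ] ℝ :=
      (f : Matrix (Fin k) (Fin k) ℝ × ℝ →ₗ[ℝ] ℝ).comp (LinearMap.inl ℝ _ ℝ) with hΦdef
    have hΦ : ∀ u, Φ u = f (u, 0) := fun u => rfl
    set μ : ℝ := f (0, 1) with hμdef
    have hkey : ∀ (u : Matrix (Fin k) (Fin k) ℝ) (v : ℝ), f (u, v) = Φ u + v * μ := by
      intro u v
      have h : (u, v) = (u, (0:ℝ)) + v • ((0 : Matrix (Fin k) (Fin k) ℝ), (1:ℝ)) := by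
        simp [Prod.ext_iff]
      rw [h, map_add, _root_.map_smul, smul_eq_mul, hΦ]
    set C : ℝ := f (0, b) with hC
    have hmem : ∀ (x : Fin n → ℝ) (u : Matrix (Fin k) (Fin k) ℝ),
        (∀ v : Fin k → ℝ, v ≠ 0 → 0 < v ⬝ᵥ u *ᵥ v) → ∀ δ : ℝ, 0 < δ →
        (M x + u, (∑ i, c i * x i) + δ) ∈ A := by
      intro x u hu δ hδ
      refine ⟨x, fun v hv => ?_, lt_add_of_pos_right _ hδ⟩
      simpa [add_sub_cancel_left] using hu v hv
    have hqone : ∀ (ε : ℝ), 0 < ε → ∀ v : Fin k → ℝ, v ≠ 0 →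
        0 < v ⬝ᵥ (ε • (1 : Matrix (Fin k) (Fin k) ℝ)) *ᵥ v := by
      intro ε hε v hv
      rw [Matrix.smul_mulVec, Matrix.one_mulVec, dotProduct_smul, smul_eq_mul]
      exact mul_pos hε (aux_dotProduct_self_pos hv)
    have key1 : ∀ x : Fin n → ℝ, Φ (M x) + (∑ i, c i * x i) * μ ≤ C := by
      intro x
      refine aux_le_of_forall_pos_add (b := Φ (1 : Matrix (Fin k) (Fin k) ℝ) + μ) ?_
      intro ε hε
      have hmemx := hf _ (hmem x (ε • 1) (hqone ε hε) ε hε)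
      rw [hkey, map_add, _root_.map_smul, smul_eq_mul] at hmemx
      have hr1 : ((∑ i, c i * x i) + ε) * μ = (∑ i, c i * x i) * μ + ε * μ := by ring
      rw [hr1] at hmemx
      have hr2 : ε * (Φ (1 : Matrix (Fin k) (Fin k) ℝ) + μ)
          = ε * Φ (1 : Matrix (Fin k) (Fin k) ℝ) + ε * μ := by ring
      rw [hr2]
      linarith
    have key2 : ∀ u : Matrix (Fin k) (Fin k) ℝ,
        (∀ v : Fin k → ℝ, 0 ≤ v ⬝ᵥ u *ᵥ v) → Φ u ≤ 0 := by
      intro u hu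
      have step : ∀ ε : ℝ, 0 < ε → Φ u + ε * Φ (1 : Matrix (Fin k) (Fin k) ℝ) ≤ 0 := by
        intro ε hε
        have hq : ∀ v : Fin k → ℝ, v ≠ 0 →
            0 < v ⬝ᵥ (u + ε • (1 : Matrix (Fin k) (Fin k) ℝ)) *ᵥ v := by
          intro v hv
          rw [Matrix.add_mulVec, dotProduct_add]
          exact add_pos_of_nonneg_of_pos (hu v) (hqone ε hε v hv)
        have hstep : ∀ t : ℝ, 0 < t →
            (Φ (M xs) + ((∑ i, c i * xs i) + 1) * μ)
              + t * (Φ u + ε * Φ (1 : Matrix (Fin k) (Fin k) ℝ)) ≤ C := by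
          intro t ht
          have hqt : ∀ v : Fin k → ℝ, v ≠ 0 →
              0 < v ⬝ᵥ (t • (u + ε • (1 : Matrix (Fin k) (Fin k) ℝ))) *ᵥ v := by
            intro v hv
            rw [Matrix.smul_mulVec, dotProduct_smul, smul_eq_mul]
            exact mul_pos ht (hq v hv)
          have hthis := hf _ (hmem xs _ hqt 1 one_pos)
          have hsplit : Φ (M xs + t • (u + ε • (1 : Matrix (Fin k) (Fin k) ℝ)))
              = Φ (M xs) + t * (Φ u + ε * Φ (1 : Matrix (Fin k) (Fin k) ℝ)) := by
            simp only [map_add, _root_.map_smul, smul_eq_mul]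
            try ring
          rw [hkey, hsplit] at hthis
          linarith
        exact aux_nonpos_of_forall_pos_add hstep
      exact aux_le_of_forall_pos_add (b := Φ (1 : Matrix (Fin k) (Fin k) ℝ))
        fun ε hε => by linarith [step ε hε]
    have key3 : μ ≤ 0 := by
      refine aux_nonpos_of_forall_pos_add
        (a := Φ (M xs) + Φ (1 : Matrix (Fin k) (Fin k) ℝ) + (∑ i, c i * xs i) * μ) (C := C) ?_
      intro t ht
      have hthis := hf _ (hmem xs 1
        (fun v hv => by rw [Matrix.one_mulVec]; exact aux_dotProduct_self_pos hv) t ht)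
      rw [hkey, map_add] at hthis
      have hr : ((∑ i, c i * xs i) + t) * μ = (∑ i, c i * xs i) * μ + t * μ := by ring
      rw [hr] at hthis
      linarith
    have key4 : μ < 0 := by
      rcases lt_or_eq_of_le key3 with h | h
      · exact h
      · exfalso
        have hmem0 : ((0 : Matrix (Fin k) (Fin k) ℝ), (∑ i, c i * xs i) + 1) ∈ A := by
          refine ⟨xs, fun v hv => ?_, lt_add_of_pos_right _ one_pos⟩
          have hh := hxsPD.dotProduct_mulVec_pos hv
          simpa [star_trivial, zero_sub] using hh
        have hthis := hf _ hmem0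
        rw [hC, hkey, hkey] at hthis
        rw [h] at hthis
        simp at hthis
    have hμne : μ ≠ 0 := ne_of_lt key4
    have hΦM : ∀ x : Fin n → ℝ, Φ (M x) = (∑ i, x i * Φ (F i)) + Φ G := by
      intro x
      simp only [hM]
      rw [map_add, map_sum]
      congr 1
      exact Finset.sum_congr rfl fun i _ => by rw [_root_.map_smul, smul_eq_mul]
    have key5 : ∀ i₀ : Fin n, Φ (F i₀) + μ * c i₀ = 0 := by
      intro i₀
      have hlin : ∀ t : ℝ, t * (Φ (F i₀) + μ * c i₀) + Φ G ≤ C := by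
        intro t
        have h1 := key1 (Pi.single (M := fun _ : Fin n => ℝ) i₀ t)
        rw [hΦM] at h1
        have h2 : ∑ i, Pi.single (M := fun _ : Fin n => ℝ) i₀ t i * Φ (F i) = t * Φ (F i₀) := by
          rw [Finset.sum_eq_single i₀]
          · simp
          · intro i _ hi; simp [Pi.single_apply, hi]
          · intro h; exact absurd (Finset.mem_univ i₀) h
        have h3 : ∑ i, c i * Pi.single (M := fun _ : Fin n => ℝ) i₀ t i = c i₀ * t := by
          rw [Finset.sum_eq_single i₀]
          · simp
          · intro i _ hi; simp [Pi.single_apply, hi]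
          · intro h; exact absurd (Finset.mem_univ i₀) h
        rw [h2, h3] at h1
        have hr : t * (Φ (F i₀) + μ * c i₀) = t * Φ (F i₀) + (c i₀ * t) * μ := by ring
        linarith
      exact aux_eq_zero_of_forall_mul_le hlin
    -- construct the dual matrix Z
    set E : Fin k → Fin k → Matrix (Fin k) (Fin k) ℝ :=
      fun i j => Matrix.single i j 1 with hE
    set Z : Matrix (Fin k) (Fin k) ℝ :=
      Matrix.of (fun i j => (Φ (E i j) + Φ (E j i)) / (2 * μ)) with hZdef
    have hZapp : ∀ i j, Z i j = (Φ (E i j) + Φ (E j i)) / (2 * μ) := fun i j => rfl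
    have hexp : ∀ N : Matrix (Fin k) (Fin k) ℝ, Φ N = ∑ i, ∑ j, N i j * Φ (E i j) := by
      intro N
      conv_lhs => rw [Matrix.matrix_eq_sum_single N]
      rw [map_sum]
      refine Finset.sum_congr rfl fun i _ => ?_
      rw [map_sum]
      refine Finset.sum_congr rfl fun j _ => ?_
      rw [show Matrix.single i j (N i j) = N i j • Matrix.single i j 1 from by
        rw [Matrix.smul_single, smul_eq_mul, mul_one]]
      rw [_root_.map_smul, smul_eq_mul]
    have htrace : ∀ N : Matrix (Fin k) (Fin k) ℝ, N.IsSymm → (N * Z).trace = Φ N / μ := by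
      intro N hN
      have h1 : (N * Z).trace = ∑ i, ∑ j, N i j * Z j i := by
        simp [Matrix.trace, Matrix.mul_apply, Matrix.diag]
      have h2 : ∑ i, ∑ j, N i j * Φ (E j i) = Φ N := by
        calc ∑ i, ∑ j, N i j * Φ (E j i) = ∑ j, ∑ i, N i j * Φ (E j i) := Finset.sum_comm
          _ = Φ Nᵀ := by
              rw [hexp Nᵀ]
              exact Finset.sum_congr rfl fun x _ => Finset.sum_congr rfl fun y _ => by
                rw [Matrix.transpose_apply]
          _ = Φ N := by rw [hN]
      rw [h1]
      calc ∑ i, ∑ j, N i j * Z j i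
          = ∑ i, ∑ j, (N i j * Φ (E j i) + N i j * Φ (E i j)) / (2 * μ) := by
            refine Finset.sum_congr rfl fun i _ => Finset.sum_congr rfl fun j _ => ?_
            rw [hZapp]; ring
        _ = ((∑ i, ∑ j, N i j * Φ (E j i)) + (∑ i, ∑ j, N i j * Φ (E i j))) / (2 * μ) := by
            rw [← Finset.sum_add_distrib, Finset.sum_div]
            refine Finset.sum_congr rfl fun i _ => ?_
            rw [← Finset.sum_add_distrib, Finset.sum_div]
        _ = (Φ N + Φ N) / (2 * μ) := by rw [h2, ← hexp N]
        _ = Φ N / μ := by field_simp; ring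
    have hZpsd : Z.PosSemidef := by
      refine Matrix.PosSemidef.of_dotProduct_mulVec_nonneg ?_ ?_
      · rw [Matrix.IsHermitian, Matrix.conjTranspose_eq_transpose_of_trivial]
        ext i j
        rw [Matrix.transpose_apply, hZapp, hZapp]
        ring
      · intro v
        have hsym : (Matrix.vecMulVec v v).IsSymm := by
          rw [Matrix.IsSymm]
          ext i j
          rw [Matrix.transpose_apply, Matrix.vecMulVec_apply, Matrix.vecMulVec_apply, mul_comm]
        have hquad : star v ⬝ᵥ Z *ᵥ v = (Matrix.vecMulVec v v * Z).trace := by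
          rw [show star v = v from star_trivial v]
          simp only [dotProduct, Matrix.mulVec, Matrix.trace, Matrix.mul_apply,
            Matrix.diag_apply, Matrix.vecMulVec_apply, Finset.mul_sum]
          rw [Finset.sum_comm]
          exact Finset.sum_congr rfl fun i _ => Finset.sum_congr rfl fun j _ => by ring
        rw [hquad, htrace _ hsym]
        have hφvv : Φ (Matrix.vecMulVec v v) ≤ 0 := by
          apply key2
          intro u
          have hmv : Matrix.vecMulVec v v *ᵥ u = (v ⬝ᵥ u) • v := by
            funext i
            simp only [Matrix.mulVec, dotProduct, Matrix.vecMulVec_apply,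
              Pi.smul_apply, smul_eq_mul, Finset.sum_mul]
            exact Finset.sum_congr rfl fun j _ => by ring
          rw [hmv, dotProduct_smul, smul_eq_mul, dotProduct_comm]
          exact mul_self_nonneg _
        rw [← neg_div_neg_eq]
        exact div_nonneg (by linarith) (by linarith)
    refine ⟨Z, hZpsd, ?_⟩
    intro i
    rw [htrace (F i) (hF i)]
    have h5 := key5 i
    have hΦF : Φ (F i) = -(μ * c i) := by linarith
    rw [hΦF]
    field_simp
    ring

  · rintro ⟨Z, hZ, hTr⟩
    refine ⟨(G * Z).trace, ?_⟩
    rintro y ⟨x, hx, rfl⟩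
    have hfeas : (-(M x)).PosSemidef := hx
    have h0 : 0 ≤ ((-(M x)) * Z).trace := aux_trace_mul_psd_nonneg hfeas hZ
    have hexp : ((-(M x)) * Z).trace = -(∑ i, x i * (F i * Z).trace) - (G * Z).trace := by
      rw [hM]
      simp only [Matrix.neg_mul, Matrix.trace_neg, Matrix.add_mul, Matrix.trace_add,
        Matrix.sum_mul, Matrix.trace_sum, Matrix.smul_mul, Matrix.trace_smul, smul_eq_mul]
      ring
    have hci : ∀ i, (F i * Z).trace = -(c i) := fun i => by
      have := hTr i; linarith
    rw [hexp] at h0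
    simp only [hci] at h0
    have : ∑ i, x i * -(c i) = -∑ i, c i * x i := by
      rw [← Finset.sum_neg_distrib]
      exact Finset.sum_congr rfl fun i _ => by ring
    rw [this] at h0
    simp only at h0 ⊢
    linarith
end
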